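/- arXiv:2605.05860 — 4 statements merged into one kernel-verified Lean document; each statement's English description precedes it below -/
import Mathlib

section
/- Let P = {(x,y) : v^l·x − u^l·y − σ^l ≥ 0, l = 1,…,L} with each (v^l,u^l) ∈ ℝ^{m+s} strictly positive, and T = P ∩ (ℝ^m_+ × (ℝ^s_+ \ {0})). For (x,y) ∈ T and r with y_r > 0, define φ^♮_r = min_{l=1,…,L} (v^l·x − Σ_{q≠r} u^l_q y_q − σ^l) / (u^l_r y_r). Then φ^♮_r ≥ 1, and the point (x, ((φ^♮_r − 1)e_r + 1_s) ⊗ y) belongs to the strongly efficient frontier ∂^s(T). -/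
noncomputable section

open Finset

/-- A point in input-output space: `m` inputs and `s` outputs. -/
abbrev Pt (m s : ℕ) := (Fin m → ℝ) × (Fin s → ℝ)

/-- Standard inner product. -/
def dot {n : ℕ} (v x : Fin n → ℝ) : ℝ := ∑ i, v i * x i

/-- Strongly efficient frontier: non-dominated points of `T`. -/
def strongF {m s : ℕ} (T : Set (Pt m s)) : Set (Pt m s) :=
  {p | p ∈ T ∧ ∀ q : Pt m s,
    (∀ i, q.1 i ≤ p.1 i) → (∀ r, p.2 r ≤ q.2 r) → q ≠ p → q ∉ T}

/-- Weakly efficient frontier of `T`. -/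
def weakF {m s : ℕ} (T : Set (Pt m s)) : Set (Pt m s) :=
  {p | p ∈ T ∧ ∀ q : Pt m s,
    (∀ i, q.1 i < p.1 i) → (∀ r, p.2 r < q.2 r) → q ∉ T}

/-- The polyhedron `P = {(x,y) : vˡ·x − uˡ·y − σˡ ≥ 0, l = 1,…,L}`. -/
def polyP {m s L : ℕ} (v : Fin L → Fin m → ℝ) (u : Fin L → Fin s → ℝ)
    (σ : Fin L → ℝ) : Set (Pt m s) :=
  {p | ∀ l, 0 ≤ dot (v l) p.1 - dot (u l) p.2 - σ l}

/-- `T = P ∩ (ℝ^m_+ × (ℝ^s_+ \ {0}))`. -/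
def TSet {m s L : ℕ} (v : Fin L → Fin m → ℝ) (u : Fin L → Fin s → ℝ)
    (σ : Fin L → ℝ) : Set (Pt m s) :=
  {p | p ∈ polyP v u σ ∧ (∀ i, 0 ≤ p.1 i) ∧ (∀ r, 0 ≤ p.2 r) ∧ p.2 ≠ 0}

/-!
Scaling output `r` by `t` lowers the slack of constraint `l` by `(t − 1) uˡ_r y_r`, so the slack
equals `(φˡ − t) uˡ_r y_r` where `φˡ` is the `l`-th ratio. Hence every `φˡ ≥ 1`, and at
`t = φ♮_r = minₗ φˡ` all constraints still hold while the minimizing one becomes active. A point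
of `T` at which a constraint with strictly positive coefficients is active is not dominated in `T`,
since passing to a dominating point strictly decreases `vˡ·x − uˡ·y`.
-/

section Dot

variable {n : ℕ}

lemma dot_le_dot {w a b : Fin n → ℝ} (hw : ∀ i, 0 ≤ w i) (h : ∀ i, a i ≤ b i) :
    dot w a ≤ dot w b :=
  sum_le_sum fun i _ => mul_le_mul_of_nonneg_left (h i) (hw i)

lemma dot_lt_dot {w a b : Fin n → ℝ} (hw : ∀ i, 0 < w i) (h : ∀ i, a i ≤ b i) (hne : a ≠ b) :
    dot w a < dot w b := by
  obtain ⟨j, hj⟩ := Function.ne_iff.1 hne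
  exact sum_lt_sum (fun i _ => mul_le_mul_of_nonneg_left (h i) (hw i).le)
    ⟨j, mem_univ j, mul_lt_mul_of_pos_left ((h j).lt_of_ne hj) (hw j)⟩

lemma dot_update (w y : Fin n → ℝ) (r : Fin n) (c : ℝ) :
    dot w (Function.update y r c) = w r * c + ∑ q ∈ univ.erase r, w q * y q := by
  rw [dot, ← add_sum_erase _ _ (mem_univ r), Function.update_self]
  congr 1
  exact sum_congr rfl fun q hq => by rw [Function.update_of_ne (ne_of_mem_erase hq)]

end Dot

lemma mem_strongF_of_active {m s : ℕ} {T : Set (Pt m s)} {a : Fin m → ℝ} {b : Fin s → ℝ} {c : ℝ}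
    (ha : ∀ i, 0 < a i) (hb : ∀ r, 0 < b r) (hT : ∀ q ∈ T, 0 ≤ dot a q.1 - dot b q.2 - c)
    {p : Pt m s} (hp : p ∈ T) (hact : dot a p.1 - dot b p.2 - c = 0) : p ∈ strongF T := by
  refine ⟨hp, fun q hx hy hne hq => ?_⟩
  have hax : dot a q.1 ≤ dot a p.1 := dot_le_dot (fun i => (ha i).le) hx
  have hby : dot b p.2 ≤ dot b q.2 := dot_le_dot (fun i => (hb i).le) hy
  have hstrict : dot a q.1 < dot a p.1 ∨ dot b p.2 < dot b q.2 := by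
    by_cases h : q.1 = p.1
    · exact Or.inr (dot_lt_dot hb hy fun h' => hne (Prod.ext h h'.symm))
    · exact Or.inl (dot_lt_dot ha hx h)
  have := hT q hq
  rcases hstrict with h | h <;> linarith

/-- The largest factor by which output `r` of `(x, y)` can be scaled keeping `a·x − b·y − c ≥ 0`;
the paper's `φ♮_r` is its minimum over the constraints. -/
def outputRatio {m s : ℕ} (a : Fin m → ℝ) (b : Fin s → ℝ) (c : ℝ) (x : Fin m → ℝ)
    (y : Fin s → ℝ) (r : Fin s) : ℝ :=
  (dot a x - (∑ q ∈ univ.erase r, b q * y q) - c) / (b r * y r)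

section OutputRatio

variable {m s : ℕ} {a : Fin m → ℝ} {b : Fin s → ℝ} {c : ℝ} {x : Fin m → ℝ} {y : Fin s → ℝ}
  {r : Fin s}

lemma slack_update_mul (hd : 0 < b r * y r) (t : ℝ) :
    dot a x - dot b (Function.update y r (t * y r)) - c
      = (outputRatio a b c x y r - t) * (b r * y r) := by
  rw [dot_update, outputRatio, sub_mul, div_mul_cancel₀ _ hd.ne']
  ring

lemma one_le_outputRatio (hd : 0 < b r * y r) (h : 0 ≤ dot a x - dot b y - c) :
    1 ≤ outputRatio a b c x y r := by
  have hslack := slack_update_mul (a := a) (c := c) (x := x) hd 1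
  rw [one_mul, Function.update_eq_self] at hslack
  exact sub_nonneg.1 (nonneg_of_mul_nonneg_left (hslack ▸ h) hd)

end OutputRatio

lemma update_mul_mem_TSet {m s L : ℕ} {v : Fin L → Fin m → ℝ} {u : Fin L → Fin s → ℝ}
    {σ : Fin L → ℝ} {x : Fin m → ℝ} {y : Fin s → ℝ} (hxy : (x, y) ∈ TSet v u σ) {r : Fin s}
    (hyr : 0 < y r) {t : ℝ} (ht : 0 < t)
    (hP : ∀ l, 0 ≤ dot (v l) x - dot (u l) (Function.update y r (t * y r)) - σ l) :
    (x, Function.update y r (t * y r)) ∈ TSet v u σ := by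
  have hpos : 0 < t * y r := mul_pos ht hyr
  refine ⟨hP, hxy.2.1, fun q => ?_, fun h => hpos.ne' (by simpa using congrFun h r)⟩
  rcases eq_or_ne q r with rfl | hq
  · simpa using hpos.le
  · simpa [Function.update_of_ne hq] using hxy.2.2.1 q

theorem stmt5_general {m s L : ℕ} (hL : 0 < L)
    (v : Fin L → Fin m → ℝ) (u : Fin L → Fin s → ℝ) (σ : Fin L → ℝ)
    (hpos : ∀ l, (∀ i, 0 < v l i) ∧ (∀ r, 0 < u l r))
    (x : Fin m → ℝ) (y : Fin s → ℝ) (hxy : (x, y) ∈ TSet v u σ)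
    (r : Fin s) (hyr : 0 < y r)
    (φn : ℝ)
    (hφn : φn = sInf {t : ℝ | ∃ l : Fin L,
      t = (dot (v l) x - (∑ q ∈ Finset.univ.erase r, u l q * y q) - σ l) /
        (u l r * y r)}) :
    1 ≤ φn ∧ (x, Function.update y r (φn * y r)) ∈ strongF (TSet v u σ) := by
  have : Nonempty (Fin L) := ⟨⟨0, hL⟩⟩
  set ρ : Fin L → ℝ := fun l => outputRatio (v l) (u l) (σ l) x y r
  have hφ : φn = ⨅ l, ρ l :=
    hφn.trans (congrArg sInf (Set.ext fun _ => exists_congr fun _ => eq_comm))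
  have hd (l : Fin L) : 0 < u l r * y r := mul_pos ((hpos l).2 r) hyr
  have hφ1 : 1 ≤ φn := hφ ▸ le_ciInf fun l => one_le_outputRatio (hd l) (hxy.1 l)
  have hslack (l : Fin L) :
      dot (v l) x - dot (u l) (Function.update y r (φn * y r)) - σ l = (ρ l - φn) * (u l r * y r) :=
    slack_update_mul (hd l) φn
  obtain ⟨l₀, hl₀⟩ := exists_eq_ciInf_of_finite (f := ρ)
  refine ⟨hφ1, mem_strongF_of_active (hpos l₀).1 (hpos l₀).2 (fun q hq => hq.1 l₀) ?_ ?_⟩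
  · refine update_mul_mem_TSet hxy hyr (one_pos.trans_le hφ1) fun l => ?_
    rw [hslack l]
    exact mul_nonneg (sub_nonneg.2 (hφ ▸ ciInf_le (Set.finite_range ρ).bddBelow l)) (hd l).le
  · rw [hslack l₀, hl₀, ← hφ, sub_self, zero_mul]

/-- `φ♮_r ≥ 1` and the single-output-expanded target lies on `∂ˢ(T)`. -/
theorem stmt5 {m s L : ℕ} (hL : 0 < L)
    (v : Fin L → Fin m → ℝ) (u : Fin L → Fin s → ℝ) (σ : Fin L → ℝ)
    (hpos : ∀ l, (∀ i, 0 < v l i) ∧ (∀ r, 0 < u l r))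
    (hσ : ∀ l, ∃ p ∈ polyP v u σ, dot (v l) p.1 - dot (u l) p.2 = σ l)
    (x : Fin m → ℝ) (y : Fin s → ℝ) (hxy : (x, y) ∈ TSet v u σ)
    (r : Fin s) (hyr : 0 < y r)
    (φn : ℝ)
    (hφn : φn = sInf {t : ℝ | ∃ l : Fin L,
      t = (dot (v l) x - (∑ q ∈ Finset.univ.erase r, u l q * y q) - σ l) /
        (u l r * y r)}) :
    1 ≤ φn ∧ (x, Function.update y r (φn * y r)) ∈ strongF (TSet v u σ) :=
  stmt5_general hL v u σ hpos x y hxy r hyr φn hφn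
end
end

section
/- Define P = {(x,y) : Σ_j λ_j x_j + R⁻π ≤ x, Σ_j λ_j y_j + R⁺π ≥ y, Σ_j λ_j = 1, λ ≥ 0, π ≥ 0 for some λ ∈ ℝ^n, π ∈ ℝ^K} and W = {(v,u,σ) : v·1_m + u·1_s = 1, v·x_j − u·y_j − σ ≥ 0 for j = 1,…,n, vR⁻ − uR⁺ ≥ 0, v ≥ 0, u ≥ 0}. Then P = {(x,y) : v·x − u·y ≥ σ for all (v,u,σ) ∈ W}. -/
noncomputable section

open Finset

/-- The trade-offs production set
`P = {(x,y) : Σλⱼxⱼ + R⁻π ≤ x, Σλⱼyⱼ + R⁺π ≥ y, Σλⱼ = 1, λ ≥ 0, π ≥ 0}`. -/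
def Pcons {m s n K : ℕ} (X : Fin n → Fin m → ℝ) (Y : Fin n → Fin s → ℝ)
    (Rm : Fin m → Fin K → ℝ) (Rp : Fin s → Fin K → ℝ) : Set (Pt m s) :=
  {p | ∃ (lam : Fin n → ℝ) (π : Fin K → ℝ),
    (∀ j, 0 ≤ lam j) ∧ (∀ t, 0 ≤ π t) ∧ (∑ j, lam j) = 1 ∧
    (∀ i, (∑ j, lam j * X j i) + (∑ t, Rm i t * π t) ≤ p.1 i) ∧
    (∀ r, p.2 r ≤ (∑ j, lam j * Y j r) + ∑ t, Rp r t * π t)}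

/-- The multiplier set `W`. -/
def Wset {m s n K : ℕ} (X : Fin n → Fin m → ℝ) (Y : Fin n → Fin s → ℝ)
    (Rm : Fin m → Fin K → ℝ) (Rp : Fin s → Fin K → ℝ) :
    Set ((Fin m → ℝ) × (Fin s → ℝ) × ℝ) :=
  {w | (∑ i, w.1 i) + (∑ r, w.2.1 r) = 1 ∧
    (∀ j, 0 ≤ dot w.1 (X j) - dot w.2.1 (Y j) - w.2.2) ∧
    (∀ t, 0 ≤ (∑ i, w.1 i * Rm i t) - ∑ r, w.2.1 r * Rp r t) ∧
    (∀ i, 0 ≤ w.1 i) ∧ (∀ r, 0 ≤ w.2.1 r)}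
/-!
`(x, y) ∈ P` says exactly that `(x, y, 1)` is a nonnegative combination of the columns
`(xⱼ, yⱼ, 1)`, `(R⁻ₜ, R⁺ₜ, 0)` and the slack columns `(eᵢ, 0, 0)`, `(0, -eᵣ, 0)`. A finitely
generated cone is closed (by conic Carathéodory it is a finite union of images of orthants under
injective linear maps), so Hahn–Banach separates `(x, y, 1)` from it whenever `(x, y) ∉ P`. The
separating functional is `(v, -u, -σ)` with `(v, u, σ)` satisfying every constraint of `W` except
the normalisation `Σ v + Σ u = 1`; dividing by `Σ v + Σ u` puts it into `W`, and when that sum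
vanishes `v = u = 0`, so the constraint at any `j` gives `σ ≤ 0`. The other inclusion is weak
duality.
-/

open Topology Matrix

namespace PointedCone

variable {E : Type*} [AddCommGroup E] [Module ℝ E]

theorem mem_hull_range_iff {ι : Type*} [Fintype ι] {v : ι → E} {x : E} :
    x ∈ hull ℝ (Set.range v) ↔ ∃ c : ι → ℝ, 0 ≤ c ∧ ∑ i, c i • v i = x := by
  rw [Submodule.mem_span_range_iff_exists_fun]
  constructor
  · rintro ⟨c, rfl⟩
    exact ⟨fun i => c i, fun i => (c i).2, rfl⟩
  · rintro ⟨c, hc, rfl⟩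
    exact ⟨fun i => ⟨c i, hc i⟩, rfl⟩

theorem mem_hull_finset_iff {t : Finset E} {x : E} :
    x ∈ hull ℝ (t : Set E) ↔ ∃ c : E → ℝ, (∀ v ∈ t, 0 ≤ c v) ∧ ∑ v ∈ t, c v • v = x := by
  rw [← Set.image_id (t : Set E), Submodule.mem_span_image_finset_iff_exists_fun']
  constructor
  · rintro ⟨c, rfl⟩
    exact ⟨fun v => c v, fun v _ => (c v).2, rfl⟩
  · rintro ⟨c, hc, rfl⟩
    refine ⟨fun v => ⟨max (c v) 0, le_max_right _ _⟩, sum_congr rfl fun v hv => ?_⟩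
    simp [max_eq_left (hc v hv)]

theorem exists_mem_hull_erase_of_not_linearIndepOn [DecidableEq E] {t : Finset E} {x : E}
    (ht : ¬LinearIndepOn ℝ id (t : Set E)) (hx : x ∈ hull ℝ (t : Set E)) :
    ∃ w ∈ t, x ∈ hull ℝ (t.erase w : Set E) := by
  obtain ⟨c, hc, rfl⟩ := mem_hull_finset_iff.1 hx
  obtain ⟨f, hf, hpos⟩ : ∃ f : E → ℝ, ∑ v ∈ t, f v • v = 0 ∧ ∃ v ∈ t, 0 < f v := by
    obtain ⟨f, hf, v, hv, hfv⟩ := not_linearIndepOn_finset_iff.1 ht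
    simp only [id] at hf
    rcases hfv.lt_or_gt with hneg | hpos
    · exact ⟨-f, by simp [hf], v, hv, by simpa using hneg⟩
    · exact ⟨f, hf, v, hv, hpos⟩
  -- Subtracting `ρ • f` for the minimal ratio `ρ = c w / f w` keeps the coefficients
  -- nonnegative and kills the one at `w`.
  obtain ⟨w, hw, hmin⟩ := exists_min_image (t.filter (0 < f ·)) (fun v => c v / f v)
    (by simpa [Finset.Nonempty] using hpos)
  rw [mem_filter] at hw
  set ρ := c w / f w
  refine ⟨w, hw.1, mem_hull_finset_iff.2 ⟨fun v => c v - ρ * f v, fun v hv => ?_, ?_⟩⟩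
  · have hvt := mem_of_mem_erase hv
    rcases lt_or_ge 0 (f v) with hfv | hfv
    · have := (le_div_iff₀ hfv).1 (hmin v (mem_filter.2 ⟨hvt, hfv⟩))
      linarith
    · have : 0 ≤ ρ := div_nonneg (hc w hw.1) hw.2.le
      nlinarith [hc v hvt]
  · rw [sum_erase t (by simp [ρ, div_mul_cancel₀ _ hw.2.ne'])]
    simp [sub_smul, mul_smul, sum_sub_distrib, ← smul_sum, hf]

theorem exists_linearIndepOn_of_mem_hull {t : Finset E} {x : E} (hx : x ∈ hull ℝ (t : Set E)) :
    ∃ t' ⊆ t, LinearIndepOn ℝ id (t' : Set E) ∧ x ∈ hull ℝ (t' : Set E) := by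
  classical
  induction t using Finset.strongInduction with
  | H t ih =>
    by_cases ht : LinearIndepOn ℝ id (t : Set E)
    · exact ⟨t, subset_rfl, ht, hx⟩
    · obtain ⟨w, hw, hxw⟩ := exists_mem_hull_erase_of_not_linearIndepOn ht hx
      obtain ⟨t', ht', hind, hx'⟩ := ih _ (erase_ssubset hw) hxw
      exact ⟨t', ht'.trans (erase_subset w t), hind, hx'⟩

variable [TopologicalSpace E] [IsTopologicalAddGroup E] [ContinuousSMul ℝ E] [T2Space E]

theorem isClosed_hull_of_linearIndepOn {t : Finset E} (ht : LinearIndepOn ℝ id (t : Set E)) :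
    IsClosed (hull ℝ (t : Set E) : Set E) := by
  let L := Fintype.linearCombination ℝ (Subtype.val : t → E)
  have hL : IsClosedEmbedding L := LinearMap.isClosedEmbedding_of_injective <|
    LinearMap.ker_eq_bot.2 (linearIndependent_iff_injective_fintypeLinearCombination.1 ht)
  have : (hull ℝ (t : Set E) : Set E) = L '' Set.Ici 0 := by
    ext x
    rw [show (t : Set E) = Set.range (Subtype.val : t → E) by simp, SetLike.mem_coe,
      mem_hull_range_iff]
    simp [L, Fintype.linearCombination_apply]
  rw [this]
  exact hL.isClosedMap _ isClosed_Ici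

theorem isClosed_of_fg {C : PointedCone ℝ E} (hC : C.FG) : IsClosed (C : Set E) := by
  classical
  obtain ⟨S, rfl⟩ := hC
  have : (hull ℝ (S : Set E) : Set E) =
      ⋃ (t : Finset E) (_ : t ∈ S.powerset.filter fun t : Finset E =>
        LinearIndepOn ℝ id (t : Set E)), hull ℝ (t : Set E) := by
    ext x
    simp only [Set.mem_iUnion, mem_filter, mem_powerset, SetLike.mem_coe, exists_prop]
    constructor
    · intro hx
      obtain ⟨t, htS, ht, hxt⟩ := exists_linearIndepOn_of_mem_hull hx
      exact ⟨t, ⟨htS, ht⟩, hxt⟩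
    · rintro ⟨t, ⟨htS, -⟩, hxt⟩
      exact Submodule.span_mono (coe_subset.2 htS) hxt
  rw [this]
  exact isClosed_biUnion_finset fun t ht => isClosed_hull_of_linearIndepOn (mem_filter.1 ht).2

variable [LocallyConvexSpace ℝ E]

theorem hyperplane_separation_point_of_fg {C : PointedCone ℝ E} (hC : C.FG) {b : E}
    (hb : b ∉ C) : ∃ f : StrongDual ℝ E, (∀ x ∈ C, 0 ≤ f x) ∧ f b < 0 :=
  ProperCone.hyperplane_separation_point ⟨C, isClosed_of_fg hC⟩ hb

end PointedCone

theorem LinearMap.exists_dotProduct_prod {κ₁ κ₂ : Type*} [Fintype κ₁] [Fintype κ₂]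
    [DecidableEq κ₁] [DecidableEq κ₂] (f : ((κ₁ → ℝ) × (κ₂ → ℝ) × ℝ) →ₗ[ℝ] ℝ) :
    ∃ (a : κ₁ → ℝ) (b : κ₂ → ℝ) (c : ℝ), ∀ x y τ, f (x, y, τ) = a ⬝ᵥ x + b ⬝ᵥ y + c * τ := by
  refine ⟨fun i => f (fun j => if i = j then 1 else 0, 0, 0),
    fun r => f (0, fun j => if r = j then 1 else 0, 0), f (0, 0, 1), fun x y τ => ?_⟩
  have hx := (f ∘ₗ LinearMap.inl ℝ _ _).pi_apply_eq_sum_univ x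
  have hy := (f ∘ₗ LinearMap.inr ℝ _ _ ∘ₗ LinearMap.inl ℝ _ _).pi_apply_eq_sum_univ y
  simp only [LinearMap.coe_comp, Function.comp_apply, LinearMap.inl_apply, LinearMap.inr_apply,
    smul_eq_mul] at hx hy
  rw [← Prod.mk_zero_zero] at hx
  have hsplit : ((x, y, τ) : (κ₁ → ℝ) × (κ₂ → ℝ) × ℝ) = (x, 0, 0) + (0, y, 0) + τ • (0, 0, 1) := by
    simp
  rw [hsplit, map_add, map_add, map_smul]
  simp [hx, hy, dotProduct, mul_comm]

theorem dot_eq_dotProduct {k : ℕ} (v x : Fin k → ℝ) : dot v x = v ⬝ᵥ x := rfl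

section TradeOffs

variable {m s n K : ℕ} {X : Fin n → Fin m → ℝ} {Y : Fin n → Fin s → ℝ}
  {Rm : Fin m → Fin K → ℝ} {Rp : Fin s → Fin K → ℝ}

theorem le_of_mem_Pcons_of_mem_Wset {p : Pt m s} (hp : p ∈ Pcons X Y Rm Rp)
    {w : (Fin m → ℝ) × (Fin s → ℝ) × ℝ} (hw : w ∈ Wset X Y Rm Rp) :
    w.2.2 ≤ dot w.1 p.1 - dot w.2.1 p.2 := by
  obtain ⟨lam, π, hlam, hπ, hsum, hx, hy⟩ := hp
  obtain ⟨v, u, σ⟩ := w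
  obtain ⟨-, hX, hR, hv, hu⟩ := hw
  have hx : lam ᵥ* X + Rm *ᵥ π ≤ p.1 := hx
  have hy : p.2 ≤ lam ᵥ* Y + Rp *ᵥ π := hy
  have hX : 0 ≤ X *ᵥ v - Y *ᵥ u - σ • 1 := fun j => by
    simpa [dot_eq_dotProduct, mulVec, dotProduct_comm] using hX j
  have hR : 0 ≤ v ᵥ* Rm - u ᵥ* Rp := fun t => by simpa [vecMul, dotProduct] using hR t
  have key : lam ⬝ᵥ (X *ᵥ v - Y *ᵥ u - σ • 1) + π ⬝ᵥ (v ᵥ* Rm - u ᵥ* Rp) =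
      v ⬝ᵥ (lam ᵥ* X + Rm *ᵥ π) - u ⬝ᵥ (lam ᵥ* Y + Rp *ᵥ π) - σ := by
    simp only [dotProduct_sub, dotProduct_add, dotProduct_smul, dotProduct_one, hsum,
      smul_eq_mul, mul_one, dotProduct_mulVec lam X, dotProduct_mulVec lam Y,
      dotProduct_mulVec v Rm, dotProduct_mulVec u Rp, dotProduct_comm v (lam ᵥ* X),
      dotProduct_comm u (lam ᵥ* Y), dotProduct_comm π, sub_dotProduct]
    ring
  have := dotProduct_le_dotProduct_of_nonneg_left hx hv
  have := dotProduct_le_dotProduct_of_nonneg_left hy hu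
  have := dotProduct_nonneg_of_nonneg hlam hX
  have := dotProduct_nonneg_of_nonneg hπ hR
  simp only [dot_eq_dotProduct]
  linarith

variable (X Y Rm Rp) in
def tradeoffGen : (Fin n ⊕ Fin K) ⊕ (Fin m ⊕ Fin s) → (Fin m → ℝ) × (Fin s → ℝ) × ℝ :=
  Sum.elim (Sum.elim (fun j => (X j, Y j, 1)) fun t => (fun i => Rm i t, fun r => Rp r t, 0))
    (Sum.elim (fun i => (Pi.single i 1, 0, 0)) fun r => (0, -Pi.single r 1, 0))

theorem mem_Pcons_of_mem_hull {p : Pt m s}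
    (hp : (p.1, p.2, 1) ∈ PointedCone.hull ℝ (Set.range (tradeoffGen X Y Rm Rp))) :
    p ∈ Pcons X Y Rm Rp := by
  obtain ⟨c, hc, hsum⟩ := PointedCone.mem_hull_range_iff.1 hp
  simp only [Pi.le_def, Pi.zero_apply] at hc
  simp only [tradeoffGen, Fintype.sum_sum_type, Sum.elim_inl, Sum.elim_inr, Prod.ext_iff,
    Prod.fst_add, Prod.snd_add, Prod.fst_sum, Prod.snd_sum, Prod.smul_mk] at hsum
  obtain ⟨hx, hy, hone⟩ := hsum
  refine ⟨fun j => c (.inl (.inl j)), fun t => c (.inl (.inr t)), fun j => hc _, fun t => hc _,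
    by simpa using hone, fun i => ?_, fun r => ?_⟩
  · have := congrFun hx i
    simp [Finset.sum_apply, Pi.single_apply, mul_comm] at this ⊢
    linarith [hc (.inr (.inl i))]
  · have := congrFun hy r
    simp [Finset.sum_apply, Pi.single_apply, mul_comm] at this ⊢
    linarith [hc (.inr (.inr r))]

theorem le_of_forall_mem_Wset (hn : 0 < n) {p : Pt m s}
    (hp : ∀ w ∈ Wset X Y Rm Rp, w.2.2 ≤ dot w.1 p.1 - dot w.2.1 p.2)
    {v : Fin m → ℝ} {u : Fin s → ℝ} {σ : ℝ}
    (hX : ∀ j, 0 ≤ dot v (X j) - dot u (Y j) - σ)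
    (hR : ∀ t, 0 ≤ (∑ i, v i * Rm i t) - ∑ r, u r * Rp r t)
    (hv : ∀ i, 0 ≤ v i) (hu : ∀ r, 0 ≤ u r) :
    σ ≤ dot v p.1 - dot u p.2 := by
  have hv' : 0 ≤ ∑ i, v i := sum_nonneg fun i _ => hv i
  have hu' : 0 ≤ ∑ r, u r := sum_nonneg fun r _ => hu r
  rcases (add_nonneg hv' hu').eq_or_lt with h0 | hpos
  · obtain ⟨hv0, hu0⟩ := (add_eq_zero_iff_of_nonneg hv' hu').1 h0.symm
    rw [sum_eq_zero_iff_of_nonneg fun i _ => hv i] at hv0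
    rw [sum_eq_zero_iff_of_nonneg fun r _ => hu r] at hu0
    obtain rfl : v = 0 := funext fun i => hv0 i (mem_univ i)
    obtain rfl : u = 0 := funext fun r => hu0 r (mem_univ r)
    simpa [dot] using hX ⟨0, hn⟩
  · set c := (∑ i, v i) + ∑ r, u r
    have hc := inv_pos.2 hpos
    have := hp (c⁻¹ • (v, u, σ)) ⟨?_, fun j => ?_, fun t => ?_, fun i => ?_, fun r => ?_⟩
    · simp only [Prod.smul_mk, smul_eq_mul, dot_eq_dotProduct, smul_dotProduct, ← mul_sub]
        at this ⊢
      exact le_of_mul_le_mul_left this hc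
    · simp [← mul_sum, ← mul_add, c, hpos.ne']
    · simpa [dot_eq_dotProduct, smul_dotProduct, ← mul_sub] using mul_nonneg hc.le (hX j)
    · simpa [mul_assoc, ← mul_sum, ← mul_sub] using mul_nonneg hc.le (hR t)
    · exact mul_nonneg hc.le (hv i)
    · exact mul_nonneg hc.le (hu r)

theorem nonneg_of_nonneg_tradeoffGen (hn : 0 < n) {p : Pt m s}
    (hp : ∀ w ∈ Wset X Y Rm Rp, w.2.2 ≤ dot w.1 p.1 - dot w.2.1 p.2)
    (f : ((Fin m → ℝ) × (Fin s → ℝ) × ℝ) →ₗ[ℝ] ℝ) (hf : ∀ k, 0 ≤ f (tradeoffGen X Y Rm Rp k)) :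
    0 ≤ f (p.1, p.2, 1) := by
  obtain ⟨a, b, c, hf_eq⟩ := f.exists_dotProduct_prod
  have := le_of_forall_mem_Wset hn hp (v := a) (u := -b) (σ := -c) (fun j => ?_) (fun t => ?_)
    (fun i => ?_) (fun r => ?_)
  · simp only [hf_eq, dot_eq_dotProduct, neg_dotProduct] at this ⊢
    linarith
  · simpa [tradeoffGen, hf_eq, dot_eq_dotProduct] using hf (.inl (.inl j))
  · simpa [tradeoffGen, hf_eq, dotProduct, mul_comm] using hf (.inl (.inr t))
  · simpa [tradeoffGen, hf_eq] using hf (.inr (.inl i))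
  · simpa [tradeoffGen, hf_eq] using hf (.inr (.inr r))

end TradeOffs

theorem stmt12_general {m s n K : ℕ} (hn : 0 < n)
    (X : Fin n → Fin m → ℝ) (Y : Fin n → Fin s → ℝ)
    (Rm : Fin m → Fin K → ℝ) (Rp : Fin s → Fin K → ℝ) :
    Pcons X Y Rm Rp =
      {p : Pt m s | ∀ w ∈ Wset X Y Rm Rp,
        w.2.2 ≤ dot w.1 p.1 - dot w.2.1 p.2} := by
  ext p
  refine ⟨fun hp w hw => le_of_mem_Pcons_of_mem_Wset hp hw, fun hp => ?_⟩
  by_contra hP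
  obtain ⟨f, hf, hfp⟩ := PointedCone.hyperplane_separation_point_of_fg
    (Submodule.fg_span (Set.finite_range (tradeoffGen X Y Rm Rp))) (mt mem_Pcons_of_mem_hull hP)
  exact hfp.not_ge <| nonneg_of_nonneg_tradeoffGen hn hp f fun k =>
    hf _ (PointedCone.subset_hull (Set.mem_range_self k))

/-- dual description of the trade-offs production set `P`. -/
theorem stmt12 {m s n K : ℕ} (hn : 0 < n)
    (X : Fin n → Fin m → ℝ) (Y : Fin n → Fin s → ℝ)
    (Rm : Fin m → Fin K → ℝ) (Rp : Fin s → Fin K → ℝ)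
    (hdata : ∀ j, (∀ i, 0 ≤ X j i) ∧ (∀ r, 0 ≤ Y j r)) :
    Pcons X Y Rm Rp =
      {p : Pt m s | ∀ w ∈ Wset X Y Rm Rp,
        w.2.2 ≤ dot w.1 p.1 - dot w.2.1 p.2} :=
  stmt12_general hn X Y Rm Rp
end
end

section
/- Let T = P ∩ (ℝ^m_+ × (ℝ^s_+ \ {0})) with P = {(x,y) : v^l·x − u^l·y − σ^l ≥ 0, l = 1,…,L}, all (v^l,u^l) strictly positive. Let (x,y) ∈ T, (x',y') ∈ T \ ∂^s(T), and let θ* ∈ (0,1]^m, φ* ≥ 1_s satisfy (θ*⊗x, φ*⊗y) ∈ ∂^s(T) with some constraint active: v^{l̄}·(θ*⊗x) − u^{l̄}·(φ*⊗y) − σ^{l̄} = 0 and v^{l̄}·(θ*⊗x') − u^{l̄}·(φ*⊗y') − σ^{l̄} < 0 for some l̄. Define α = max over those l with σ^l > v^l·(θ*⊗x') − u^l·(φ*⊗y') of [σ^l − v^l·(θ*⊗x') + u^l·(φ*⊗y')] / [v^l·((1_m − θ*)⊗x') − u^l·((1_s − φ*)⊗y')]. Then 0 < α < 1 and ((α1_m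 + (1−α)θ*)⊗x', (α1_s + (1−α)φ*)⊗y') ∈ ∂^s(T). -/
/-!
Write `Aˡ` and `Bˡ` for `vˡ·x − uˡ·y` at `(θ* ⊗ x', φ* ⊗ y')` and at `(x', y')`. Along the path
`t ↦ ((t + (1 − t) θ*) ⊗ x', (t + (1 − t) φ*) ⊗ y')` the value of constraint `l` is
`(1 − t) Aˡ + t Bˡ`, and `Bˡ > σˡ` for every `l` because `(x', y')` lies off `∂ˢ(T)`. A constraint
violated at `t = 0` is therefore satisfied exactly from its crossing time
`(σˡ − Aˡ) / (Bˡ − Aˡ) ∈ (0, 1)` on, so at the largest crossing time `α` all constraints hold and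
the one attaining the maximum is active: the point lies on `∂ˢ(T)` by the activity
characterization.
-/
noncomputable section

open Finset

lemma dot_one_sub_mul {n : ℕ} (w c z : Fin n → ℝ) :
    dot w (fun i => (1 - c i) * z i) = dot w z - dot w (fun i => c i * z i) := by
  simp only [dot, ← Finset.sum_sub_distrib]
  exact Finset.sum_congr rfl fun i _ => by ring

lemma dot_mix_mul {n : ℕ} (t : ℝ) (w c z : Fin n → ℝ) :
    dot w (fun i => (t + (1 - t) * c i) * z i)
      = (1 - t) * dot w (fun i => c i * z i) + t * dot w z := by
  simp only [dot, Finset.mul_sum, ← Finset.sum_add_distrib]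
  exact Finset.sum_congr rfl fun i _ => by ring

section Crossing

variable {a b c t : ℝ}

lemma crossing_mem_Ioo (hac : a < c) (hcb : c < b) : (c - a) / (b - a) ∈ Set.Ioo 0 1 :=
  ⟨div_pos (by linarith) (by linarith), (div_lt_one (by linarith)).2 (by linarith)⟩

lemma le_mix_of_crossing_le (hab : a < b) (ht : (c - a) / (b - a) ≤ t) :
    c ≤ (1 - t) * a + t * b := by
  rw [div_le_iff₀ (by linarith)] at ht
  linarith

lemma mix_crossing_eq (hab : a < b) :
    (1 - (c - a) / (b - a)) * a + (c - a) / (b - a) * b = c := by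
  field_simp [(sub_pos.2 hab).ne']
  ring

end Crossing

theorem exists_eq_of_csSup_crossing {ι : Type*} [Finite ι] {a b c : ι → ℝ}
    (hcb : ∀ l, c l < b l) (hac : ∃ l, a l < c l) {α : ℝ}
    (hα : α = sSup {t | ∃ l, a l < c l ∧ t = (c l - a l) / (b l - a l)}) :
    α ∈ Set.Ioo 0 1 ∧ (∀ l, c l ≤ (1 - α) * a l + α * b l) ∧
      ∃ l, (1 - α) * a l + α * b l = c l := by
  set S := {t | ∃ l, a l < c l ∧ t = (c l - a l) / (b l - a l)}
  have hfin : S.Finite :=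
    (Set.finite_range fun l => (c l - a l) / (b l - a l)).subset fun _ ⟨l, _, ht⟩ => ⟨l, ht.symm⟩
  obtain ⟨l₀, hl₀⟩ := hac
  obtain ⟨l, hl, rfl⟩ : α ∈ S := hα ▸ Set.Nonempty.csSup_mem ⟨_, l₀, hl₀, rfl⟩ hfin
  have hle : ∀ k, a k < c k → (c k - a k) / (b k - a k) ≤ (c l - a l) / (b l - a l) :=
    fun k hk => hα ▸ le_csSup hfin.bddAbove ⟨k, hk, rfl⟩
  have hIoo := crossing_mem_Ioo hl (hcb l)
  refine ⟨hIoo, fun k => ?_, l, mix_crossing_eq (hl.trans (hcb l))⟩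
  by_cases hk : a k < c k
  · exact le_mix_of_crossing_le (hk.trans (hcb k)) (hle k hk)
  · nlinarith [not_lt.1 hk, hcb k, hIoo.1, hIoo.2]

lemma mul_mem_TSet {m s L : ℕ} {v : Fin L → Fin m → ℝ} {u : Fin L → Fin s → ℝ}
    {σ : Fin L → ℝ} {x : Fin m → ℝ} {y : Fin s → ℝ} {c : Fin m → ℝ} {d : Fin s → ℝ}
    (hxy : (x, y) ∈ TSet v u σ) (hc : ∀ i, 0 ≤ c i) (hd : ∀ r, 0 < d r)
    (hP : ∀ l, 0 ≤ dot (v l) (fun i => c i * x i) - dot (u l) (fun r => d r * y r) - σ l) :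
    ((fun i => c i * x i), (fun r => d r * y r)) ∈ TSet v u σ := by
  obtain ⟨-, hx, hy, hy0⟩ := hxy
  refine ⟨hP, fun i => mul_nonneg (hc i) (hx i), fun r => mul_nonneg (hd r).le (hy r), ?_⟩
  intro h
  exact hy0 (funext fun r => (mul_eq_zero.1 (congrFun h r)).resolve_left (hd r).ne')

theorem stmt16_general {m s L : ℕ}
    (v : Fin L → Fin m → ℝ) (u : Fin L → Fin s → ℝ) (σ : Fin L → ℝ)
    (hchar : ∀ p ∈ TSet v u σ, p ∈ strongF (TSet v u σ) ↔
      ∃ l, dot (v l) p.1 - dot (u l) p.2 - σ l = 0)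
    (x' : Fin m → ℝ) (y' : Fin s → ℝ)
    (hxy' : (x', y') ∈ TSet v u σ) (hxy'ne : (x', y') ∉ strongF (TSet v u σ))
    (θ : Fin m → ℝ) (φ : Fin s → ℝ)
    (hθ : ∀ i, 0 < θ i ∧ θ i ≤ 1) (hφ : ∀ r, 1 ≤ φ r)
    (lbar : Fin L)
    (hneg : dot (v lbar) (fun i => θ i * x' i) -
      dot (u lbar) (fun r => φ r * y' r) - σ lbar < 0)
    (α : ℝ)
    (hα : α = sSup {a : ℝ | ∃ l : Fin L,
      dot (v l) (fun i => θ i * x' i) - dot (u l) (fun r => φ r * y' r) < σ l ∧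
      a = (σ l - dot (v l) (fun i => θ i * x' i) +
            dot (u l) (fun r => φ r * y' r)) /
          (dot (v l) (fun i => (1 - θ i) * x' i) -
            dot (u l) (fun r => (1 - φ r) * y' r))}) :
    0 < α ∧ α < 1 ∧
      ((fun i => (α + (1 - α) * θ i) * x' i),
       (fun r => (α + (1 - α) * φ r) * y' r)) ∈ strongF (TSet v u σ) := by
  set A : Fin L → ℝ := fun l =>
    dot (v l) (fun i => θ i * x' i) - dot (u l) (fun r => φ r * y' r) with hA
  set B : Fin L → ℝ := fun l => dot (v l) x' - dot (u l) y'
  have hB : ∀ l, σ l < B l := fun l => sub_pos.1 <| (hxy'.1 l).lt_of_ne' fun h =>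
    hxy'ne ((hchar _ hxy').2 ⟨l, h⟩)
  have hα' : α = sSup {t | ∃ l, A l < σ l ∧ t = (σ l - A l) / (B l - A l)} := by
    simp only [hα, hA, B, dot_one_sub_mul, sub_add, sub_sub_sub_comm]
  obtain ⟨⟨hα0, hα1⟩, hfeas, l, hl⟩ :=
    exists_eq_of_csSup_crossing hB ⟨lbar, by linarith⟩ hα'
  have hslack : ∀ l, dot (v l) (fun i => (α + (1 - α) * θ i) * x' i) -
      dot (u l) (fun r => (α + (1 - α) * φ r) * y' r) - σ l
      = (1 - α) * A l + α * B l - σ l := fun l => by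
    rw [dot_mix_mul, dot_mix_mul]
    ring
  have hmem := mul_mem_TSet hxy' (fun i => by nlinarith [hθ i]) (fun r => by nlinarith [hφ r])
    fun l => (hslack l).symm ▸ sub_nonneg.2 (hfeas l)
  exact ⟨hα0, hα1, (hchar _ hmem).2 ⟨l, (hslack l).trans (sub_eq_zero.2 hl)⟩⟩

/-- the convex-combination projection step: `0 < α < 1` and the
combined point lies on the strongly efficient frontier of `T`. -/
theorem stmt16 {m s L : ℕ}
    (v : Fin L → Fin m → ℝ) (u : Fin L → Fin s → ℝ) (σ : Fin L → ℝ)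
    (hpos : ∀ l, (∀ i, 0 < v l i) ∧ (∀ r, 0 < u l r))
    (hchar : ∀ p ∈ TSet v u σ, p ∈ strongF (TSet v u σ) ↔
      ∃ l, dot (v l) p.1 - dot (u l) p.2 - σ l = 0)
    (x x' : Fin m → ℝ) (y y' : Fin s → ℝ)
    (hxy : (x, y) ∈ TSet v u σ)
    (hxy' : (x', y') ∈ TSet v u σ) (hxy'ne : (x', y') ∉ strongF (TSet v u σ))
    (θ : Fin m → ℝ) (φ : Fin s → ℝ)
    (hθ : ∀ i, 0 < θ i ∧ θ i ≤ 1) (hφ : ∀ r, 1 ≤ φ r)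
    (hfront : ((fun i => θ i * x i), (fun r => φ r * y r)) ∈ strongF (TSet v u σ))
    (lbar : Fin L)
    (hact : dot (v lbar) (fun i => θ i * x i) -
      dot (u lbar) (fun r => φ r * y r) - σ lbar = 0)
    (hneg : dot (v lbar) (fun i => θ i * x' i) -
      dot (u lbar) (fun r => φ r * y' r) - σ lbar < 0)
    (α : ℝ)
    (hα : α = sSup {a : ℝ | ∃ l : Fin L,
      dot (v l) (fun i => θ i * x' i) - dot (u l) (fun r => φ r * y' r) < σ l ∧
      a = (σ l - dot (v l) (fun i => θ i * x' i) +
            dot (u l) (fun r => φ r * y' r)) /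
          (dot (v l) (fun i => (1 - θ i) * x' i) -
            dot (u l) (fun r => (1 - φ r) * y' r))}) :
    0 < α ∧ α < 1 ∧
      ((fun i => (α + (1 - α) * θ i) * x' i),
       (fun r => (α + (1 - α) * φ r) * y' r)) ∈ strongF (TSet v u σ) :=
  stmt16_general v u σ hchar x' y' hxy' hxy'ne θ φ hθ hφ lbar hneg α hα
end
end

section
/- Let P = {(x,y) ∈ ℝ^m × ℝ^s : v^l·x − u^l·y − σ^l ≥ 0, l = 1,…,L} be nonempty with each (v^l,u^l) nonzero and nonnegative and each constraint defining a facet. Then the weakly efficient frontier of P equals the union of the faces cut by the constraints: ∂^w(P) = ⋃_{l=1}^L {(x,y) ∈ P : v^l·x − u^l·y − σ^l = 0}. -/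
noncomputable section

open Finset

/-! Strictly dominating a point `(x, y)` strictly decreases `vˡ·x − uˡ·y` when `(vˡ, uˡ) ≥ 0` is
nonzero, so points on a face of `P` are weakly efficient. Conversely, a point at which every
constraint is slack lies in the interior of `P`, and every neighbourhood of a point contains points
strictly dominating it. -/

section Frontier

variable {m s : ℕ}

theorem exists_strictly_dominating_mem_of_mem_nhds {p : Pt m s} {U : Set (Pt m s)}
    (hU : U ∈ nhds p) : ∃ q ∈ U, (∀ i, q.1 i < p.1 i) ∧ ∀ r, p.2 r < q.2 r := by
  let shift : ℝ → Pt m s := fun ε => (fun i => p.1 i - ε, fun r => p.2 r + ε)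
  have hshift : Filter.Tendsto shift (nhdsWithin 0 (Set.Ioi 0)) (nhds p) := by
    have : Continuous shift := by fun_prop
    simpa [shift] using (this.tendsto 0).mono_left nhdsWithin_le_nhds
  obtain ⟨ε, hεU, hε⟩ :=
    ((hshift.eventually_mem hU).and self_mem_nhdsWithin).exists
  exact ⟨shift ε, hεU, fun i => sub_lt_self _ hε, fun r => lt_add_of_pos_right _ hε⟩

theorem notMem_weakF_of_mem_interior {T : Set (Pt m s)} {p : Pt m s}
    (hp : p ∈ interior T) : p ∉ weakF T := by
  rintro ⟨-, hweak⟩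
  obtain ⟨q, hqT, hq₁, hq₂⟩ :=
    exists_strictly_dominating_mem_of_mem_nhds (mem_interior_iff_mem_nhds.mp hp)
  exact hweak q hq₁ hq₂ hqT

end Frontier

theorem continuous_dot {n : ℕ} (v : Fin n → ℝ) : Continuous (dot v) := by
  unfold dot; fun_prop

theorem dot_le_dot_s19 {n : ℕ} {v x y : Fin n → ℝ} (hv : 0 ≤ v) (hxy : x ≤ y) :
    dot v x ≤ dot v y :=
  Finset.sum_le_sum fun i _ => mul_le_mul_of_nonneg_left (hxy i) (hv i)

theorem dot_lt_dot_s19 {n : ℕ} {v x y : Fin n → ℝ} (hv : 0 ≤ v) (hv0 : v ≠ 0)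
    (hxy : ∀ i, x i < y i) : dot v x < dot v y := by
  obtain ⟨i, hi⟩ := Function.ne_iff.mp hv0
  exact Finset.sum_lt_sum (fun j _ => mul_le_mul_of_nonneg_left (hxy j).le (hv j))
    ⟨i, Finset.mem_univ i, mul_lt_mul_of_pos_left (hxy i) (lt_of_le_of_ne' (hv i) hi)⟩

section Polyhedron

variable {m s L : ℕ} {v : Fin L → Fin m → ℝ} {u : Fin L → Fin s → ℝ} {σ : Fin L → ℝ}

theorem mem_interior_polyP_of_forall_pos {p : Pt m s}
    (hp : ∀ l, 0 < dot (v l) p.1 - dot (u l) p.2 - σ l) : p ∈ interior (polyP v u σ) := by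
  have hopen : IsOpen {q : Pt m s | ∀ l, 0 < dot (v l) q.1 - dot (u l) q.2 - σ l} := by
    simp only [Set.ofPred_forall]
    exact isOpen_iInter_of_finite fun l => isOpen_lt continuous_const <|
      (((continuous_dot _).comp continuous_fst).sub ((continuous_dot _).comp continuous_snd)).sub
        continuous_const
  exact interior_maximal (fun q hq l => (hq l).le) hopen hp

theorem mem_weakF_polyP_of_eq {p : Pt m s} {l : Fin L}
    (hvu : 0 ≤ v l ∧ 0 ≤ u l) (hvu0 : (v l, u l) ≠ 0)
    (hp : p ∈ polyP v u σ) (hl : dot (v l) p.1 - dot (u l) p.2 = σ l) :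
    p ∈ weakF (polyP v u σ) := by
  refine ⟨hp, fun q hq₁ hq₂ hq => ?_⟩
  have hdrop : dot (v l) q.1 - dot (u l) q.2 < dot (v l) p.1 - dot (u l) p.2 := by
    by_cases hv : v l = 0
    · have hu : u l ≠ 0 := fun hu => hvu0 (by simp [hv, hu])
      simpa [hv, dot] using dot_lt_dot_s19 hvu.2 hu hq₂
    · linarith [dot_lt_dot_s19 hvu.1 hv hq₁, dot_le_dot_s19 hvu.2 fun r => (hq₂ r).le]
  linarith [hq l]

end Polyhedron

theorem stmt19_general {m s L : ℕ}
    (v : Fin L → Fin m → ℝ) (u : Fin L → Fin s → ℝ) (σ : Fin L → ℝ)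
    (hvu_nonneg : ∀ l, (∀ i, 0 ≤ v l i) ∧ (∀ r, 0 ≤ u l r))
    (hvu_ne : ∀ l, (v l, u l) ≠ 0) :
    weakF (polyP v u σ) =
      ⋃ l, {p ∈ polyP v u σ | dot (v l) p.1 - dot (u l) p.2 = σ l} := by
  ext p
  simp only [Set.mem_iUnion, Set.mem_ofPred_eq]
  constructor
  · intro hp
    by_contra! hslack
    refine notMem_weakF_of_mem_interior (mem_interior_polyP_of_forall_pos fun l => ?_) hp
    exact (hp.1 l).lt_of_ne fun h => hslack l hp.1 (by linarith)
  · rintro ⟨l, hp, hl⟩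
    exact mem_weakF_polyP_of_eq (hvu_nonneg l) (hvu_ne l) hp hl

/-- the weakly efficient frontier of `P` is the union of the faces
cut out by the defining constraints. -/
theorem stmt19 {m s L : ℕ}
    (v : Fin L → Fin m → ℝ) (u : Fin L → Fin s → ℝ) (σ : Fin L → ℝ)
    (hne : (polyP v u σ).Nonempty)
    (hvu_nonneg : ∀ l, (∀ i, 0 ≤ v l i) ∧ (∀ r, 0 ≤ u l r))
    (hvu_ne : ∀ l, (v l, u l) ≠ 0)
    (hmin : ∀ l, ∃ p ∈ polyP v u σ, dot (v l) p.1 - dot (u l) p.2 = σ l) :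
    weakF (polyP v u σ) =
      ⋃ l, {p ∈ polyP v u σ | dot (v l) p.1 - dot (u l) p.2 = σ l} :=
  stmt19_general v u σ hvu_nonneg hvu_ne
end
end
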